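/- arXiv:1508.07144 — 2 statements merged into one kernel-verified Lean document; each statement's English description precedes it below -/
import Mathlib

section
/- For a random walk (S_n) on the integers, the function a ↦ P[N_n* ≥ a] is sub-multiplicative: for all positive integers a, b and all n ≥ 1, P[N_n* ≥ a + b] ≤ P[N_n* ≥ a] · P[N_n* ≥ b], where N_n* = sup_y #{k ∈ {1,...,n} : S_k = y} is the maximal local time up to time n. -/
/-!
Let `T` be the first time the maximal local time reaches `a`. One step before `T` every site
had been visited fewer than `a` times, so up to time `T` every site is visited at most `a` times.
Hence on `{N_n* ≥ a + b}` the walk restarted at `T` visits some site at least `b` times within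
`n - T` steps. The event `{T = t}` is determined by `X_0, …, X_{t-1}`, while the restarted walk
is driven by `X_t, X_{t+1}, …`, which are independent of them and distributed like
`X_0, X_1, …`. Summing over `t` gives
`P[N_n* ≥ a + b] ≤ ∑_t P[T = t] P[N_n* ≥ b] ≤ P[N_n* ≥ a] P[N_n* ≥ b]`.
-/

open Finset MeasureTheory ProbabilityTheory

section Walk

variable {G : Type*} [AddCommGroup G]

def walk (x : ℕ → G) (j : ℕ) : G := ∑ k ∈ range j, x k

lemma walk_shift (x : ℕ → G) (t j : ℕ) :
    walk (fun i => x (t + i)) j = walk x (t + j) - walk x t := by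
  simp only [walk, ← sum_range_add_sum_Ico _ (Nat.le_add_right t j), sum_Ico_eq_sum_range,
    Nat.add_sub_cancel_left, add_sub_cancel_left]

lemma walk_congr {x x' : ℕ → G} {m j : ℕ} (h : ∀ i < m, x i = x' i) (hj : j ≤ m) :
    walk x j = walk x' j :=
  sum_congr rfl fun i hi => h i ((mem_range.1 hi).trans_le hj)

variable [DecidableEq G]

def localTime (x : ℕ → G) (m : ℕ) (y : G) : ℕ := #{j ∈ Icc 1 m | walk x j = y}

def maxLocalTime (x : ℕ → G) (m : ℕ) : ℕ := (Icc 1 m).sup fun k => localTime x m (walk x k)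

lemma localTime_succ (x : ℕ → G) (m : ℕ) (y : G) :
    localTime x (m + 1) y = localTime x m y + if walk x (m + 1) = y then 1 else 0 := by
  rw [localTime, ← insert_Icc_right_eq_Icc_add_one (by omega), filter_insert]
  split_ifs
  · rw [card_insert_of_notMem (by simp), localTime]
  · simp [localTime]

lemma localTime_add (x : ℕ → G) (t m : ℕ) (y : G) :
    localTime x (t + m) y = localTime x t y + localTime (fun i => x (t + i)) m (y - walk x t) := by
  induction m with
  | zero => simp [localTime]
  | succ m ih =>
    simp only [← add_assoc, localTime_succ, ih, walk_shift, sub_left_inj]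

lemma localTime_le_maxLocalTime (x : ℕ → G) (m : ℕ) (y : G) :
    localTime x m y ≤ maxLocalTime x m := by
  obtain hempty | ⟨j, hj⟩ := (filter (fun j => walk x j = y) (Icc 1 m)).eq_empty_or_nonempty
  · simp [localTime, hempty]
  · obtain ⟨hjm, rfl⟩ := mem_filter.1 hj
    exact le_sup (f := fun k => localTime x m (walk x k)) hjm

lemma maxLocalTime_mono (x : ℕ → G) : Monotone (maxLocalTime x) := by
  intro m n hmn
  refine Finset.sup_le fun k _ => (card_le_card ?_).trans (localTime_le_maxLocalTime x n (walk x k))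
  exact filter_subset_filter _ (Icc_subset_Icc_right hmn)

lemma dependsOn_maxLocalTime (m : ℕ) :
    DependsOn (maxLocalTime · m : (ℕ → G) → ℕ) (Set.Iio m) := by
  intro x x' h
  have hw : ∀ j ∈ Icc 1 m, walk x j = walk x' j := fun j hj => walk_congr h (mem_Icc.1 hj).2
  unfold maxLocalTime localTime
  refine sup_congr rfl fun k hk => ?_
  rw [hw k hk]
  exact congrArg card (filter_congr fun j hj => by rw [hw j hj])

def IsFirstPassage (x : ℕ → G) (a t : ℕ) : Prop :=
  a ≤ maxLocalTime x t ∧ ∀ s < t, maxLocalTime x s < a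

lemma IsFirstPassage.localTime_le {x : ℕ → G} {a t : ℕ} (h : IsFirstPassage x a t) (y : G) :
    localTime x t y ≤ a := by
  cases t with
  | zero => simp [localTime]
  | succ m =>
    calc localTime x (m + 1) y ≤ localTime x m y + 1 := by
          rw [localTime_succ]; split_ifs <;> omega
      _ ≤ maxLocalTime x m + 1 := Nat.add_le_add_right (localTime_le_maxLocalTime x m y) 1
      _ ≤ a := h.2 m (Nat.lt_add_one m)

lemma IsFirstPassage.unique {x : ℕ → G} {a t t' : ℕ} (h : IsFirstPassage x a t)
    (h' : IsFirstPassage x a t') : t = t' := by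
  by_contra hne
  rcases Nat.lt_or_gt_of_ne hne with hlt | hlt
  · exact (h'.2 t hlt).not_ge h.1
  · exact (h.2 t' hlt).not_ge h'.1

lemma exists_isFirstPassage {x : ℕ → G} {a n : ℕ} (h : a ≤ maxLocalTime x n) :
    ∃ t ≤ n, IsFirstPassage x a t := by
  classical
  have hex : ∃ s, a ≤ maxLocalTime x s := ⟨n, h⟩
  exact ⟨Nat.find hex, Nat.find_min' hex h, Nat.find_spec hex,
    fun s hs => not_le.1 (Nat.find_min hex hs)⟩

lemma maxLocalTime_add_le {x : ℕ → G} {a t : ℕ} (h : ∀ y, localTime x t y ≤ a) (m : ℕ) :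
    maxLocalTime x (t + m) ≤ a + maxLocalTime (fun i => x (t + i)) m :=
  Finset.sup_le fun k _ => by
    rw [localTime_add]
    exact Nat.add_le_add (h _) (localTime_le_maxLocalTime _ _ _)

lemma IsFirstPassage.le_maxLocalTime_shift {x : ℕ → G} {a b t n : ℕ}
    (h : IsFirstPassage x a t) (htn : t ≤ n) (hab : a + b ≤ maxLocalTime x n) :
    b ≤ maxLocalTime (fun i => x (t + i)) (n - t) := by
  obtain ⟨m, rfl⟩ := Nat.exists_eq_add_of_le htn
  have := maxLocalTime_add_le h.localTime_le m
  rw [Nat.add_sub_cancel_left]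
  omega

lemma dependsOn_le_maxLocalTime (b m : ℕ) :
    DependsOn (fun x : ℕ → G => b ≤ maxLocalTime x m) (Set.Iio m) :=
  fun _ _ h => congrArg (b ≤ ·) (dependsOn_maxLocalTime m h)

lemma dependsOn_isFirstPassage (a t : ℕ) :
    DependsOn (fun x : ℕ → G => IsFirstPassage x a t) (Set.Iio t) := by
  intro x x' h
  have hM : ∀ s ≤ t, maxLocalTime x s = maxLocalTime x' s := fun s hs =>
    dependsOn_maxLocalTime s fun i hi => h i (lt_of_lt_of_le hi hs)
  simp only [IsFirstPassage, hM t le_rfl]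
  exact propext (and_congr_right' (forall₂_congr fun s hs => by rw [hM s hs.le]))

end Walk

section DependsOn

variable {Ω ι E : Type*} [MeasurableSpace E] [MeasurableSingletonClass E] [Countable E]

lemma DependsOn.measurableSet_setOf {s : Set ι} (hs : s.Finite) {p : (ι → E) → Prop}
    (hp : DependsOn p s) : MeasurableSet {x | p x} := by
  obtain ⟨g, rfl⟩ := dependsOn_iff_exists_comp.1 hp
  have := hs.to_subtype
  exact Set.measurable_restrict s (MeasurableSet.of_discrete (s := {v | g v}))

lemma DependsOn.measurableSet_iSup_comap {X : ι → Ω → E} {s : Set ι} (hs : s.Finite)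
    {p : (ι → E) → Prop} (hp : DependsOn p s) :
    MeasurableSet[⨆ i ∈ s, ‹MeasurableSpace E›.comap (X i)] {ω | p fun i => X i ω} := by
  obtain ⟨g, rfl⟩ := dependsOn_iff_exists_comp.1 hp
  have := hs.to_subtype
  let _ : MeasurableSpace Ω := ⨆ i ∈ s, ‹MeasurableSpace E›.comap (X i)
  have hmeas : Measurable fun ω (i : s) => X i ω := measurable_pi_lambda _ fun i =>
    (comap_measurable (X i)).mono
      (le_iSup₂ (f := fun i _ => MeasurableSpace.comap (X i) _) i.1 i.2) le_rfl
  exact hmeas (MeasurableSet.of_discrete (s := {v | g v}))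

end DependsOn

namespace ProbabilityTheory

variable {Ω E : Type*} [MeasurableSpace Ω] [MeasurableSpace E] {P : Measure Ω}
  {X : ℕ → Ω → E}

lemma iIndepFun.map_shift_eq_map (hindep : iIndepFun X P) (hmeas : ∀ k, Measurable (X k))
    (hident : ∀ k, IdentDistrib (X k) (X 0) P P) (t : ℕ) :
    P.map (fun ω i => X (t + i) ω) = P.map (fun ω i => X i ω) := by
  rw [(hindep.precomp (add_right_injective t)).map_fun_eq_infinitePi_map (fun i => hmeas _),
    hindep.map_fun_eq_infinitePi_map hmeas]
  congr 1
  funext i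
  exact (hident _).map_eq.trans (hident i).map_eq.symm

variable [MeasurableSingletonClass E] [Countable E]

lemma iIndepFun.measure_inter_shift_eq_mul (hindep : iIndepFun X P)
    (hmeas : ∀ k, Measurable (X k)) {p q : (ℕ → E) → Prop} {t m : ℕ}
    (hp : DependsOn p (Set.Iio t)) (hq : DependsOn q (Set.Iio m)) :
    P ({ω | p fun i => X i ω} ∩ {ω | q fun i => X (t + i) ω})
      = P {ω | p fun i => X i ω} * P {ω | q fun i => X (t + i) ω} := by
  have hq' : DependsOn (fun x : ℕ → E => q fun i => x (t + i)) (Set.Ico t (t + m)) := by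
    intro x y h
    exact hq fun i hi => h (t + i) ⟨Nat.le_add_right t i, Nat.add_lt_add_left hi t⟩
  have hdisj : Disjoint (Set.Iio t) (Set.Ico t (t + m)) :=
    (Set.Iio_disjoint_Ici le_rfl).mono_right Set.Ico_subset_Ici_self
  have hind := indep_iSup_of_disjoint (fun i => (hmeas i).comap_le)
    ((iIndepFun_iff_iIndep _ _ _).1 hindep) hdisj
  exact (Indep_iff _ _ _).1 hind _ _ (hp.measurableSet_iSup_comap (Set.finite_Iio t))
    (hq'.measurableSet_iSup_comap (Set.finite_Ico _ _))

lemma iIndepFun.measure_shift_eq (hindep : iIndepFun X P) (hmeas : ∀ k, Measurable (X k))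
    (hident : ∀ k, IdentDistrib (X k) (X 0) P P) {q : (ℕ → E) → Prop} {m : ℕ}
    (hq : DependsOn q (Set.Iio m)) (t : ℕ) :
    P {ω | q fun i => X (t + i) ω} = P {ω | q fun i => X i ω} := by
  have hs := hq.measurableSet_setOf (Set.finite_Iio m)
  calc P {ω | q fun i => X (t + i) ω} = P.map (fun ω i => X (t + i) ω) {x | q x} :=
        (Measure.map_apply (measurable_pi_lambda _ fun i => hmeas _) hs).symm
    _ = P.map (fun ω i => X i ω) {x | q x} := by rw [hindep.map_shift_eq_map hmeas hident]
    _ = P {ω | q fun i => X i ω} := Measure.map_apply (measurable_pi_lambda _ hmeas) hs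

theorem iIndepFun.measure_add_le_maxLocalTime_le_mul [AddCommGroup E] [DecidableEq E]
    (hindep : iIndepFun X P) (hmeas : ∀ k, Measurable (X k))
    (hident : ∀ k, IdentDistrib (X k) (X 0) P P) (n a b : ℕ) :
    P {ω | a + b ≤ maxLocalTime (X · ω) n}
      ≤ P {ω | a ≤ maxLocalTime (X · ω) n} * P {ω | b ≤ maxLocalTime (X · ω) n} := by
  set A : ℕ → Set Ω := fun t => {ω | IsFirstPassage (X · ω) a t}
  set B : ℕ → Set Ω := fun t => {ω | b ≤ maxLocalTime (fun i => X (t + i) ω) (n - t)}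
  have hcover :
      {ω | a + b ≤ maxLocalTime (X · ω) n} ⊆ ⋃ t ∈ range (n + 1), A t ∩ B t := by
    intro ω hω
    obtain ⟨t, htn, ht⟩ := exists_isFirstPassage ((Nat.le_add_right a b).trans hω)
    exact Set.mem_biUnion (mem_range.2 (Nat.lt_succ_of_le htn))
      ⟨ht, ht.le_maxLocalTime_shift htn hω⟩
  have hB : ∀ t, P (B t) ≤ P {ω | b ≤ maxLocalTime (X · ω) n} := fun t =>
    (hindep.measure_shift_eq hmeas hident (dependsOn_le_maxLocalTime b (n - t)) t).trans_le
      (measure_mono fun ω hω => hω.trans (maxLocalTime_mono _ (Nat.sub_le n t)))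
  have hA_disj : (range (n + 1) : Set ℕ).PairwiseDisjoint A := fun t _ t' _ hne =>
    Set.disjoint_left.2 fun _ h h' => hne (h.unique h')
  have hA_meas : ∀ t, MeasurableSet (A t) := fun t => measurable_pi_lambda _ hmeas
    ((dependsOn_isFirstPassage a t).measurableSet_setOf (Set.finite_Iio t))
  have hA_sub : ⋃ t ∈ range (n + 1), A t ⊆ {ω | a ≤ maxLocalTime (X · ω) n} :=
    Set.iUnion₂_subset fun t ht _ hω =>
      hω.1.trans (maxLocalTime_mono _ (Nat.le_of_lt_succ (mem_range.1 ht)))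
  calc P {ω | a + b ≤ maxLocalTime (X · ω) n}
      ≤ ∑ t ∈ range (n + 1), P (A t ∩ B t) :=
        (measure_mono hcover).trans (measure_biUnion_finset_le _ _)
    _ = ∑ t ∈ range (n + 1), P (A t) * P (B t) := sum_congr rfl fun t _ =>
        hindep.measure_inter_shift_eq_mul hmeas (dependsOn_isFirstPassage a t)
          (dependsOn_le_maxLocalTime b (n - t))
    _ ≤ ∑ t ∈ range (n + 1), P (A t) * P {ω | b ≤ maxLocalTime (X · ω) n} :=
        sum_le_sum fun t _ => mul_le_mul_right (hB t) _
    _ = P (⋃ t ∈ range (n + 1), A t) * P {ω | b ≤ maxLocalTime (X · ω) n} := by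
        rw [← sum_mul, measure_biUnion_finset hA_disj fun t _ => hA_meas t]
    _ ≤ P {ω | a ≤ maxLocalTime (X · ω) n} * P {ω | b ≤ maxLocalTime (X · ω) n} :=
        mul_le_mul_left (measure_mono hA_sub) _

end ProbabilityTheory

theorem submultiplicative_max_local_time_general
    {Ω : Type*} [MeasurableSpace Ω] (P : Measure Ω)
    (X : ℕ → Ω → ℤ) (hXmeas : ∀ k, Measurable (X k))
    (hindep : iIndepFun X P)
    (hident : ∀ k, IdentDistrib (X k) (X 0) P P)
    (S : ℕ → Ω → ℤ) (hS : ∀ n ω, S n ω = ∑ k ∈ Finset.range n, X k ω)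
    (Nstar : ℕ → Ω → ℕ)
    (hN : ∀ n ω, Nstar n ω = (Finset.Icc 1 n).sup
      (fun k => ((Finset.Icc 1 n).filter (fun j => S j ω = S k ω)).card))
    (n : ℕ) :
    ∀ a b : ℕ, 0 < a → 0 < b →
      P {ω | a + b ≤ Nstar n ω} ≤ P {ω | a ≤ Nstar n ω} * P {ω | b ≤ Nstar n ω} := by
  intro a b _ _
  have hNstar : ∀ m ω, Nstar m ω = maxLocalTime (X · ω) m := by
    intro m ω
    simp only [hN, hS]
    rfl
  simp only [hNstar]
  exact hindep.measure_add_le_maxLocalTime_le_mul hXmeas hident n a b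

/-- Sub-multiplicativity of `a ↦ P[N_n* ≥ a]` for the maximal local time of a random walk. -/
theorem submultiplicative_max_local_time
    {Ω : Type*} [MeasurableSpace Ω] (P : Measure Ω) [IsProbabilityMeasure P]
    (X : ℕ → Ω → ℤ) (hXmeas : ∀ k, Measurable (X k))
    (hindep : iIndepFun X P)
    (hident : ∀ k, IdentDistrib (X k) (X 0) P P)
    (S : ℕ → Ω → ℤ) (hS : ∀ n ω, S n ω = ∑ k ∈ Finset.range n, X k ω)
    (Nstar : ℕ → Ω → ℕ)
    (hN : ∀ n ω, Nstar n ω = (Finset.Icc 1 n).sup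
      (fun k => ((Finset.Icc 1 n).filter (fun j => S j ω = S k ω)).card))
    (n : ℕ) (hn : 1 ≤ n) :
    ∀ a b : ℕ, 0 < a → 0 < b →
      P {ω | a + b ≤ Nstar n ω} ≤ P {ω | a ≤ Nstar n ω} * P {ω | b ≤ Nstar n ω} :=
  submultiplicative_max_local_time_general P X hXmeas hindep hident S hS Nstar hN n
end

section
/- The function f(p) = ((1−p)e^t − 1 + 2p) / (1 − (1−p)e^{−t}) is decreasing in p on (0,1) for every fixed t > 0, with limits f(0⁺) = e^t and f(1⁻) = 1. -/
/-!
In `p`, `f` is the Möbius map `p ↦ ((2 - eᵗ) p + (eᵗ - 1)) / (e⁻ᵗ p + (1 - e⁻ᵗ))`, whose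
determinant `(2 - eᵗ)(1 - e⁻ᵗ) - (eᵗ - 1) e⁻ᵗ = 2 - eᵗ - e⁻ᵗ` is negative for `t ≠ 0`; a Möbius
map with negative determinant decreases wherever its denominator is positive. The denominator is
positive on `[0, 1]`, so both limits are values of `f`: `f 0 = eᵗ` and `f 1 = 1`.
-/

open Set Filter

section LinearFractional

variable {a b c d : ℝ}

theorem strictAntiOn_linear_div_linear {s : Set ℝ} (hden : ∀ p ∈ s, 0 < c * p + d)
    (hdet : a * d - b * c < 0) :
    StrictAntiOn (fun p => (a * p + b) / (c * p + d)) s := by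
  intro p hp q hq hpq
  rw [div_lt_div_iff₀ (hden q hq) (hden p hp)]
  -- the cross-multiplied difference is `(a d - b c) (q - p)`
  nlinarith [mul_neg_of_neg_of_pos hdet (sub_pos.mpr hpq)]

theorem continuousAt_linear_div_linear {x : ℝ} (hx : c * x + d ≠ 0) :
    ContinuousAt (fun p => (a * p + b) / (c * p + d)) x :=
  (continuousAt_const.mul continuousAt_id |>.add continuousAt_const).div
    (continuousAt_const.mul continuousAt_id |>.add continuousAt_const) hx

end LinearFractional

/-- The function `f(p) = ((1-p)eᵗ - 1 + 2p)/(1 - (1-p)e^{-t})` is strictly decreasing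
on `(0,1)` with limits `eᵗ` at `0⁺` and `1` at `1⁻`. -/
theorem f_decreasing_with_limits
    (t : ℝ) (ht : 0 < t) (f : ℝ → ℝ)
    (hf : ∀ p, f p = ((1 - p) * Real.exp t - 1 + 2 * p) / (1 - (1 - p) * Real.exp (-t))) :
    StrictAntiOn f (Set.Ioo 0 1) ∧
    Tendsto f (nhdsWithin 0 (Set.Ioi 0)) (nhds (Real.exp t)) ∧
    Tendsto f (nhdsWithin 1 (Set.Iio 1)) (nhds 1) := by
  set E := Real.exp t
  set e := Real.exp (-t)
  have hE : 1 < E := Real.one_lt_exp_iff.mpr ht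
  have he : e < 1 := Real.exp_lt_one_iff.mpr (neg_neg_of_pos ht)
  have he_pos : 0 < e := Real.exp_pos _
  have hEe : E * e = 1 := by rw [← Real.exp_add, add_neg_cancel, Real.exp_zero]
  have hf_eq : f = fun p => ((2 - E) * p + (E - 1)) / (e * p + (1 - e)) :=
    funext fun p => by rw [hf]; congr 1 <;> ring
  have hden : ∀ p, 0 ≤ p → 0 < e * p + (1 - e) := fun p hp => by nlinarith
  subst hf_eq
  refine ⟨strictAntiOn_linear_div_linear (fun p hp => hden p hp.1.le) ?_, ?_, ?_⟩
  · -- `2 - eᵗ - e⁻ᵗ = -(eᵗ - 1)(1 - e⁻ᵗ)`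
    nlinarith [mul_pos (sub_pos.mpr hE) (sub_pos.mpr he)]
  · have hf0 : ((2 - E) * 0 + (E - 1)) / (e * 0 + (1 - e)) = E := by
      rw [div_eq_iff (by simpa using (hden 0 le_rfl).ne')]
      linear_combination hEe
    have h := (continuousAt_linear_div_linear (a := 2 - E) (b := E - 1)
      (hden 0 le_rfl).ne').continuousWithinAt (s := Ioi 0)
    rwa [ContinuousWithinAt, hf0] at h
  · have hf1 : ((2 - E) * 1 + (E - 1)) / (e * 1 + (1 - e)) = 1 := by norm_num
    have h := (continuousAt_linear_div_linear (a := 2 - E) (b := E - 1)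
      (hden 1 zero_le_one).ne').continuousWithinAt (s := Iio 1)
    rwa [ContinuousWithinAt, hf1] at h
end
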